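/- arXiv:2009.14060 — 2 statements merged into one kernel-verified Lean document; each statement's English description precedes it below -/
import Mathlib

section
/- For natural numbers α, x, n with n ≤ x ≤ α and x+1 ≤ α, the function d_α(x,n) = C(x,n)/C(α,n) satisfies the recurrence (α−x)·d_α(x+1,n) = n·[d_α(x,n−1) − d_α(x,n)] + (α−n)·[d_α(x,n) − d_α(x,n+1)], where terms with n−1 for n=0 or n+1 > α are interpreted via the convention d_α(x,m) = C(x,m)/C(α,m)·1_{m ≤ x} (equal to 0 when m > x). -/
/-- The intertwiner `d_α(x,n) = C(x,n)/C(α,n)` if `n ≤ x`, and `0` otherwise. -/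
noncomputable def dFun (α x n : ℕ) : ℚ :=
  if n ≤ x then (Nat.choose x n : ℚ) / (Nat.choose α n : ℚ) else 0

/-!
Since `C(x,n) = 0` for `n > x`, the cut-off in `d_α` is automatic and `d_α(x,n) = C(x,n)/C(α,n)`
for every `n`. The absorption identity `C(y,n+1)(n+1) = C(y,n)(y-n)`, applied to `y = x` and
`y = α`, gives `(α-n)(d_α(x,n) - d_α(x,n+1)) = (α-x) d_α(x,n)`, so both brackets of the recurrence
are multiples of `α - x`; Pascal's rule `C(x+1,n) = C(x,n) + C(x,n-1)` identifies their sum with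
`(α-x) d_α(x+1,n)`.
-/

theorem Nat.cast_choose_succ_mul {R : Type*} [Ring R] (x n : ℕ) :
    (x.choose (n + 1) : R) * (n + 1) = x.choose n * ((x : R) - n) := by
  rcases le_or_gt n x with hn | hn
  · have h := congrArg (Nat.cast : ℕ → R) (Nat.choose_succ_right_eq x n)
    push_cast [Nat.cast_sub hn] at h
    exact h
  · simp [Nat.choose_eq_zero_of_lt hn, Nat.choose_eq_zero_of_lt (Nat.lt_succ_of_lt hn)]

theorem dFun_eq_choose_div (α x n : ℕ) :
    dFun α x n = (x.choose n : ℚ) / α.choose n := by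
  unfold dFun
  split_ifs with h
  · rfl
  · simp [Nat.choose_eq_zero_of_lt (not_le.mp h)]

theorem dFun_zero_right (α x : ℕ) : dFun α x 0 = 1 := by
  simp [dFun]

section

variable {α n : ℕ}

theorem sub_div_choose_succ (hn : n < α) :
    ((α : ℚ) - n) / α.choose (n + 1) = (n + 1) / α.choose n := by
  have hα : (α.choose n : ℚ) ≠ 0 := by exact_mod_cast (Nat.choose_pos hn.le).ne'
  have hα' : (α.choose (n + 1) : ℚ) ≠ 0 := by exact_mod_cast (Nat.choose_pos hn).ne'
  rw [div_eq_div_iff hα' hα]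
  linear_combination -Nat.cast_choose_succ_mul (R := ℚ) α n

theorem dFun_succ_mul (x : ℕ) (hn : n < α) :
    dFun α x (n + 1) * (α - n) = dFun α x n * (x - n) :=
  calc dFun α x (n + 1) * (α - n) = x.choose (n + 1) * ((α - n) / α.choose (n + 1)) := by
        rw [dFun_eq_choose_div]; ring
    _ = x.choose (n + 1) * (n + 1) / α.choose n := by rw [sub_div_choose_succ hn]; ring
    _ = dFun α x n * (x - n) := by rw [Nat.cast_choose_succ_mul, dFun_eq_choose_div]; ring

theorem sub_mul_dFun_sub_dFun_succ (x : ℕ) (hn : n < α) :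
    ((α : ℚ) - n) * (dFun α x n - dFun α x (n + 1)) = (α - x) * dFun α x n := by
  linear_combination -dFun_succ_mul x hn

theorem dFun_succ_succ_mul (x : ℕ) (hn : n < α) :
    dFun α (x + 1) (n + 1) * (α - n) = dFun α x (n + 1) * (α - n) + dFun α x n * (n + 1) :=
  calc dFun α (x + 1) (n + 1) * (α - n)
        = (x.choose n + x.choose (n + 1)) * ((α - n) / α.choose (n + 1)) := by
        rw [dFun_eq_choose_div, Nat.choose_succ_succ', Nat.cast_add]; ring
    _ = dFun α x (n + 1) * (α - n) + dFun α x n * (n + 1) := by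
        rw [dFun_eq_choose_div, dFun_eq_choose_div, div_mul_eq_mul_div _ _ (n + 1 : ℚ),
          mul_div_assoc, ← sub_div_choose_succ hn]; ring

end

theorem stmt0 (α x n : ℕ) (hnx : n ≤ x) (hx : x + 1 ≤ α) :
    ((α : ℚ) - (x : ℚ)) * dFun α (x + 1) n =
      (n : ℚ) * (dFun α x (n - 1) - dFun α x n) +
        ((α : ℚ) - (n : ℚ)) * (dFun α x n - dFun α x (n + 1)) := by
  rcases n with _ | m
  · simpa [dFun_zero_right] using (sub_mul_dFun_sub_dFun_succ x (by omega : 0 < α)).symm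
  · have hm : (α : ℚ) - m ≠ 0 := sub_ne_zero.mpr (by norm_cast; omega)
    have pascal := dFun_succ_succ_mul x (by omega : m < α)
    have diff_m := sub_mul_dFun_sub_dFun_succ x (by omega : m < α)
    have diff_succ := sub_mul_dFun_sub_dFun_succ x (by omega : m + 1 < α)
    push_cast at diff_succ ⊢
    rw [diff_succ]
    apply mul_right_cancel₀ hm
    linear_combination ((α : ℚ) - x) * pascal - ((m : ℚ) + 1) * diff_m
end

section
/- With the operators of the previous context (J^{α,+}, J^{α,−}, J^{α,0} and A^{α,+}, A^{α,−}, A^{α,0} on functions [α] → ℝ) and d_α(x,n) = C(x,n)/C(α,n)·1_{n≤x}, the intertwining relations hold: (J^{α,+} d_α(·,n))(x) = (A^{α,+} d_α(x,·))(n), (J^{α,−} d_α(·,n))(x) = (A^{α,−} d_α(x,·))(n), and (J^{α,0} d_α(·,n))(x) = (A^{α,0} d_α(x,·))(n), for all x, n ∈ [α]. -/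
/-- `J⁺ f(n) = (α−n) f(n+1)`. -/
noncomputable def Jp (α : ℕ) (f : ℕ → ℝ) (n : ℕ) : ℝ := ((α : ℝ) - (n : ℝ)) * f (n + 1)

/-- `J⁻ f(n) = n f(n−1)` (the value `f(−1)` carries coefficient `0`). -/
noncomputable def Jm (f : ℕ → ℝ) (n : ℕ) : ℝ := (n : ℝ) * f (n - 1)

/-- `J⁰ f(n) = (n − α/2) f(n)`. -/
noncomputable def J0 (α : ℕ) (f : ℕ → ℝ) (n : ℕ) : ℝ := ((n : ℝ) - (α : ℝ) / 2) * f n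

/-- `A⁺ = J⁻ − J⁺ − 2J⁰`. -/
noncomputable def Ap (α : ℕ) (f : ℕ → ℝ) (n : ℕ) : ℝ := Jm f n - Jp α f n - 2 * J0 α f n

/-- `A⁻ = J⁺`. -/
noncomputable def Am (α : ℕ) (f : ℕ → ℝ) (n : ℕ) : ℝ := Jp α f n

/-- `A⁰ = J⁺ + J⁰`. -/
noncomputable def A0 (α : ℕ) (f : ℕ → ℝ) (n : ℕ) : ℝ := Jp α f n + J0 α f n

/-- `d_α(x,n) = C(x,n)/C(α,n)` if `n ≤ x`, else `0`. -/
noncomputable def dR (α x n : ℕ) : ℝ :=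
  if n ≤ x then (Nat.choose x n : ℝ) / (Nat.choose α n : ℝ) else 0

/-!
Since `C(x, n) = 0` for `n > x`, the indicator in `d_α` is redundant:
`d_α(x, n) = C(x, n) / C(α, n)` for all `x, n`. The three relations then reduce to the shift
identities `(α - n) d_α(x, n+1) = (x - n) d_α(x, n)`, `x d_α(x-1, n) = (x - n) d_α(x, n)` and
`(α - x) d_α(x+1, n) = n d_α(x, n-1) + (α - x - n) d_α(x, n)`, which are the absorption identity
`(k+1) C(m, k+1) = (m - k) C(m, k)` (for `m = x` and `m = α`) and Pascal's rule in disguise.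
-/

lemma cast_choose_succ_mul (m k : ℕ) :
    (m.choose (k + 1) : ℝ) * (k + 1) = m.choose k * ((m : ℝ) - k) := by
  rcases le_or_gt k m with hkm | hmk
  · exact_mod_cast Nat.choose_succ_right_eq m k
  · simp [Nat.choose_eq_zero_of_lt hmk,
      Nat.choose_eq_zero_of_lt (hmk.trans (Nat.lt_succ_self k))]

lemma cast_choose_mul_succ (m k : ℕ) :
    (m.choose k : ℝ) * (m + 1) = (m + 1).choose k * ((m : ℝ) + 1 - k) := by
  rcases le_or_gt k (m + 1) with hkm | hmk
  · exact_mod_cast Nat.choose_mul_succ_eq m k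
  · simp [Nat.choose_eq_zero_of_lt hmk, Nat.choose_eq_zero_of_lt (Nat.lt_of_succ_lt hmk)]

lemma dR_eq_div (α x n : ℕ) : dR α x n = x.choose n / α.choose n := by
  unfold dR
  split_ifs with h
  · rfl
  · simp [Nat.choose_eq_zero_of_lt (not_le.mp h)]

lemma sub_mul_dR_succ {α x : ℕ} (hx : x ≤ α) (n : ℕ) :
    ((α : ℝ) - n) * dR α x (n + 1) = ((x : ℝ) - n) * dR α x n := by
  simp only [dR_eq_div]
  rcases lt_trichotomy n α with hnα | rfl | hαn
  · have hα₀ : (α.choose n : ℝ) ≠ 0 := by exact_mod_cast (Nat.choose_pos hnα.le).ne'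
    have hα₁ : (α.choose (n + 1) : ℝ) ≠ 0 := by exact_mod_cast (Nat.choose_pos hnα).ne'
    have hx' := cast_choose_succ_mul x n
    have hα' := cast_choose_succ_mul α n
    field_simp
    apply mul_right_cancel₀ (Nat.cast_add_one_ne_zero n)
    linear_combination ((α : ℝ) - n) * α.choose n * hx' - ((x : ℝ) - n) * x.choose n * hα'
  · rcases hx.lt_or_eq with hxn | rfl
    · simp [Nat.choose_eq_zero_of_lt hxn]
    · simp
  · simp [Nat.choose_eq_zero_of_lt hαn,
      Nat.choose_eq_zero_of_lt (hαn.trans (Nat.lt_succ_self n))]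

lemma natCast_mul_dR_pred (α x n : ℕ) :
    (x : ℝ) * dR α (x - 1) n = ((x : ℝ) - n) * dR α x n := by
  cases x with
  | zero => cases n <;> simp [dR_eq_div]
  | succ m =>
    simp only [dR_eq_div, Nat.add_sub_cancel, ← mul_div_assoc]
    push_cast
    rw [mul_comm, cast_choose_mul_succ, mul_comm]

lemma sub_mul_dR_succ_left {α n : ℕ} (hn : n ≤ α) (x : ℕ) :
    ((α : ℝ) - x) * dR α (x + 1) n = n * dR α x (n - 1) + ((α : ℝ) - x - n) * dR α x n := by
  cases n with
  | zero => simp [dR_eq_div]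
  | succ m =>
    simp only [dR_eq_div, Nat.add_sub_cancel, Nat.choose_succ_succ']
    have hα₀ : (α.choose m : ℝ) ≠ 0 := by
      exact_mod_cast (Nat.choose_pos (Nat.le_of_succ_le hn)).ne'
    have hα₁ : (α.choose (m + 1) : ℝ) ≠ 0 := by exact_mod_cast (Nat.choose_pos hn).ne'
    have hx' := cast_choose_succ_mul x m
    have hα' := cast_choose_succ_mul α m
    push_cast
    field_simp
    linear_combination (α.choose m : ℝ) * hx' - (x.choose m : ℝ) * hα'

theorem stmt9_general (α : ℕ) (x n : ℕ) (hx : x ≤ α) (hn : n ≤ α) :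
    (Jp α (fun x' => dR α x' n) x = Ap α (fun n' => dR α x n') n) ∧
    (Jm (fun x' => dR α x' n) x = Am α (fun n' => dR α x n') n) ∧
    (J0 α (fun x' => dR α x' n) x = A0 α (fun n' => dR α x n') n) := by
  have shift_n := sub_mul_dR_succ hx n
  have shift_x_pred := natCast_mul_dR_pred α x n
  have shift_x_succ := sub_mul_dR_succ_left hn x
  simp only [Jp, Jm, J0, Ap, Am, A0]
  refine ⟨?_, ?_, ?_⟩
  · linear_combination shift_x_succ + shift_n
  · linear_combination shift_x_pred - shift_n
  · linear_combination -shift_n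

/-- Intertwining relations: the `J` operators acting in the `x` variable are dual,
via `d_α`, to the `A` operators acting in the `n` variable. -/
theorem stmt9 (α : ℕ) (hα : 1 ≤ α) (x n : ℕ) (hx : x ≤ α) (hn : n ≤ α) :
    (Jp α (fun x' => dR α x' n) x = Ap α (fun n' => dR α x n') n) ∧
    (Jm (fun x' => dR α x' n) x = Am α (fun n' => dR α x n') n) ∧
    (J0 α (fun x' => dR α x' n) x = A0 α (fun n' => dR α x n') n) :=
  stmt9_general α x n hx hn
end
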